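/- arXiv:2005.11000 — 2 statements merged into one kernel-verified Lean document; each statement's English description precedes it below -/
import Mathlib

section
/- Let X be a Banach space, Y₁ a normed linear space, and Y₂ a Banach space. Let S : X → Y₂ be a bounded surjective linear map and F : X → Y₁ a bounded linear map such that the restriction of F to X₀ := ker(S) is a bounded linear bijection from X₀ onto Y₁ with bounded inverse. Then the combined map x ↦ (F x, S x) is a bounded linear bijection from X onto Y₁ × Y₂ with bounded inverse. -/
/-!
Every `x` splits as `u + (x - u)`, where `u` is a preimage of `S x` of norm `≤ K ‖S x‖` (open
mapping theorem) and `x - u ∈ ker S`. The bounded inverse of `F` on `ker S` controls `x - u` by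
`‖F x‖ + ‖F‖ ‖u‖`, which bounds `‖x‖` by a multiple of `‖(F x, S x)‖` and gives injectivity;
surjectivity comes from correcting a preimage under `S` by an element of `ker S`.
-/

open Function

theorem LinearMap.prod_surjective_of_surjective_restrict_ker {R M N₁ N₂ : Type*} [Ring R]
    [AddCommGroup M] [AddCommGroup N₁] [AddCommGroup N₂] [Module R M] [Module R N₁] [Module R N₂]
    (f : M →ₗ[R] N₁) (g : M →ₗ[R] N₂) (hg : Surjective g)
    (hf : Surjective fun x : LinearMap.ker g => f x) : Surjective (f.prod g) := by
  rintro ⟨y₁, y₂⟩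
  obtain ⟨x₂, rfl⟩ := hg y₂
  obtain ⟨⟨x₀, hx₀⟩, hfx₀⟩ := hf (y₁ - f x₂)
  rw [LinearMap.mem_ker] at hx₀
  refine ⟨x₀ + x₂, ?_⟩
  simp_all

namespace ContinuousLinearMap

variable {𝕜 X Y₁ Y₂ : Type*} [NontriviallyNormedField 𝕜]
  [SeminormedAddCommGroup X] [NormedSpace 𝕜 X] [SeminormedAddCommGroup Y₁] [NormedSpace 𝕜 Y₁]
  [SeminormedAddCommGroup Y₂] [NormedSpace 𝕜 Y₂] {F : X →L[𝕜] Y₁} {S : X →L[𝕜] Y₂} {C K : ℝ}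

theorem norm_le_of_bound_on_ker (hC : 0 ≤ C) (hF : ∀ x, S x = 0 → ‖x‖ ≤ C * ‖F x‖)
    (hS : ∀ y, ∃ u, S u = y ∧ ‖u‖ ≤ K * ‖y‖) (x : X) :
    ‖x‖ ≤ C * ‖F x‖ + (C * ‖F‖ + 1) * K * ‖S x‖ := by
  obtain ⟨u, hSu, hu⟩ := hS (S x)
  have hker : ‖x - u‖ ≤ C * ‖F (x - u)‖ := hF _ (by rw [map_sub, hSu, sub_self])
  have hFker : ‖F (x - u)‖ ≤ ‖F x‖ + ‖F‖ * ‖u‖ :=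
    (map_sub F x u ▸ norm_sub_le _ _).trans (add_le_add_right (F.le_opNorm u) _)
  calc ‖x‖ ≤ ‖x - u‖ + ‖u‖ := norm_le_norm_sub_add x u
    _ ≤ C * (‖F x‖ + ‖F‖ * ‖u‖) + ‖u‖ := by gcongr; exact hker.trans (by gcongr)
    _ = C * ‖F x‖ + (C * ‖F‖ + 1) * ‖u‖ := by ring
    _ ≤ C * ‖F x‖ + (C * ‖F‖ + 1) * (K * ‖S x‖) := by gcongr
    _ = C * ‖F x‖ + (C * ‖F‖ + 1) * K * ‖S x‖ := by ring

theorem exists_norm_le_mul_norm_prod_of_bound_on_ker (hC : 0 < C) (hK : 0 < K)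
    (hF : ∀ x, S x = 0 → ‖x‖ ≤ C * ‖F x‖) (hS : ∀ y, ∃ u, S u = y ∧ ‖u‖ ≤ K * ‖y‖) :
    ∃ C' > 0, ∀ x, ‖x‖ ≤ C' * ‖F.prod S x‖ := by
  refine ⟨C + (C * ‖F‖ + 1) * K, by positivity, fun x => ?_⟩
  calc ‖x‖ ≤ C * ‖F x‖ + (C * ‖F‖ + 1) * K * ‖S x‖ := norm_le_of_bound_on_ker hC.le hF hS x
    _ ≤ C * ‖F.prod S x‖ + (C * ‖F‖ + 1) * K * ‖F.prod S x‖ := by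
      gcongr
      exacts [_root_.norm_fst_le (F.prod S x), _root_.norm_snd_le (F.prod S x)]
    _ = (C + (C * ‖F‖ + 1) * K) * ‖F.prod S x‖ := by ring

end ContinuousLinearMap

/-- If `S : X → Y₂` is a bounded surjective linear map between Banach spaces,
`F : X → Y₁` is bounded linear into a normed space, and the restriction of `F` to
`X₀ = ker S` is a bounded linear bijection onto `Y₁` with bounded inverse, then
`x ↦ (F x, S x)` is a bounded linear bijection from `X` onto `Y₁ × Y₂` with bounded inverse. -/
theorem combined_map_isomorphism
    {X Y₁ Y₂ : Type*}
    [NormedAddCommGroup X] [NormedSpace ℝ X] [CompleteSpace X]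
    [NormedAddCommGroup Y₁] [NormedSpace ℝ Y₁]
    [NormedAddCommGroup Y₂] [NormedSpace ℝ Y₂] [CompleteSpace Y₂]
    (S : X →L[ℝ] Y₂) (F : X →L[ℝ] Y₁)
    (hS : Function.Surjective S)
    (hFbij : Function.Bijective
      (fun x : LinearMap.ker (S : X →ₗ[ℝ] Y₂) => F (x : X)))
    (hFinv : ∃ C > 0, ∀ x : LinearMap.ker (S : X →ₗ[ℝ] Y₂), ‖(x : X)‖ ≤ C * ‖F (x : X)‖) :
    Function.Bijective (F.prod S) ∧ ∃ C > 0, ∀ x : X, ‖x‖ ≤ C * ‖(F.prod S) x‖ := by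
  obtain ⟨C, hC, hFker⟩ := hFinv
  obtain ⟨K, hK, hSpre⟩ := S.exists_preimage_norm_le hS
  obtain ⟨C', hC', hbound⟩ :=
    ContinuousLinearMap.exists_norm_le_mul_norm_prod_of_bound_on_ker hC hK (fun x hx => hFker ⟨x, hx⟩) hSpre
  have hinj : Injective (F.prod S) :=
    ((F.prod S).antilipschitz_of_bound (K := ⟨C', hC'.le⟩) hbound).injective
  exact ⟨⟨hinj, LinearMap.prod_surjective_of_surjective_restrict_ker _ _ hS hFbij.2⟩, C', hC',
    hbound⟩
end

section
/- Let I = (0,T) and Ω ⊂ ℝ^d with Ω bounded Lipschitz. For u₁ in L₂(I;H¹(Ω)) ∩ H^{1/2}(I;L₂(Ω)) and v₃ ∈ L₂(I;H¹(Ω)) ∩ H^{1/2}_{00}(I;L₂(Ω)) (where H^{1/2}_{00}(I) := [L₂(I), H¹₀(I)]_{1/2} is the interpolation space), the pairing ∫_{I×Ω} ∂_t u₁ · v₃ dx dt extends continuously from smooth functions and satisfies |∫_{I×Ω} ∂_t u₁ v₃ dx dt| ≲ ‖u₁‖_{H^{1/2}(I;L₂(Ω))} ‖v₃‖_{H^{1/2}_{00}(I;L₂(Ω))}.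 -/
open MeasureTheory RealInnerProductSpace

noncomputable section

variable {V₀ : Type*} [NormedAddCommGroup V₀] [InnerProductSpace ℝ V₀] [CompleteSpace V₀]

/-- The K-functional `K(t,u; V₀, V₁)` for the couple `(V₀, V₁)`, where the subspace
`V₁ ⊆ V₀` carries the graph norm `(‖w‖² + ‖D w‖²)^{1/2}` of the operator `D`
(here: the time derivative, so that `V₁` plays the role of `H¹(I;L₂(Ω))`). -/
def Kfun (V₁ : Submodule ℝ V₀) (D : V₁ →ₗ[ℝ] V₀) (t : ℝ) (u : V₀) : ℝ :=
  sInf {r : ℝ | ∃ w : V₁, r = ‖u - (w : V₀)‖ +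
    t * Real.sqrt (‖(w : V₀)‖ ^ 2 + ‖D w‖ ^ 2)}

/-- The interpolation norm of exponent `1/2` obtained by the real (K-)method:
`‖u‖_{[V₀,V₁]_{1/2}} = (∫₀^∞ (t^{-1/2} K(t,u))² dt/t)^{1/2}`. -/
def halfNorm (V₁ : Submodule ℝ V₀) (D : V₁ →ₗ[ℝ] V₀) (u : V₀) : ℝ :=
  Real.sqrt (∫ t in Set.Ioi (0 : ℝ), (Kfun V₁ D t u) ^ 2 / t ^ 2)

/-!
Fix splittings `u ≈ w k ∈ V₁` and `v ≈ b k ∈ W₁` realising the K-functionals at the dyadic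
scales `t = 2 ^ k` up to a factor `2`, and telescope
`D u = D (u - w (-m)) + ∑_{-m ≤ k < m} D (w k - w (k + 1)) + D (w m)`.
Pairing an increment with `v = (v - b k) + b k` and integrating by parts on the `b k` part
bounds it by `20 · 2⁻ᵏ K(2ᵏ, u) K(2ᵏ, v)`; by Cauchy–Schwarz and the comparison of dyadic sums
with the K-integrals, the middle sum is at most `80 ‖u‖_{1/2} ‖v‖_{1/2}`, while the two boundary
terms are `O(2⁻ᵐ)` (the lower one after integrating by parts once more).
-/

open Set Function

lemma sum_setIntegral_le_setIntegral {X ι : Type*} [MeasurableSpace X] {μ : Measure X}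
    {f : X → ℝ} {s : Set X} {t : ι → Set X} (I : Finset ι) (hf : IntegrableOn f s μ)
    (hf₀ : 0 ≤ᵐ[μ.restrict s] f) (ht : ∀ i, MeasurableSet (t i)) (hts : ∀ i, t i ⊆ s)
    (hdisj : Pairwise (Disjoint on t)) :
    ∑ i ∈ I, ∫ x in t i, f x ∂μ ≤ ∫ x in s, f x ∂μ := by
  rw [← integral_biUnion_finset I (fun i _ => ht i) (hdisj.set_pairwise _)
    (fun i _ => hf.mono_set (hts i))]
  exact setIntegral_mono_set hf hf₀ (iUnion₂_subset fun i _ => hts i).eventuallyLE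

lemma pairwise_disjoint_Ioc_two_zpow :
    Pairwise (Disjoint on fun k : ℤ => Ioc ((2 : ℝ) ^ k) (2 * 2 ^ k)) := by
  refine (pairwise_disjoint_on _).2 fun k l hkl => Ioc_disjoint_Ioc_of_le ?_
  rw [← zpow_one_add₀ two_ne_zero]
  exact zpow_le_zpow_right₀ one_le_two (by omega)

section

variable {E : Type*} [NormedAddCommGroup E] [InnerProductSpace ℝ E] {V : Submodule ℝ E}
  (D : V →ₗ[ℝ] E)

def graphNorm (w : V) : ℝ := √(‖(w : E)‖ ^ 2 + ‖D w‖ ^ 2)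

lemma graphNorm_nonneg (w : V) : 0 ≤ graphNorm D w := Real.sqrt_nonneg _

lemma norm_le_graphNorm (w : V) : ‖(w : E)‖ ≤ graphNorm D w :=
  Real.le_sqrt_of_sq_le (le_add_of_nonneg_right (sq_nonneg _))

lemma norm_apply_le_graphNorm (w : V) : ‖D w‖ ≤ graphNorm D w :=
  Real.le_sqrt_of_sq_le (le_add_of_nonneg_left (sq_nonneg _))

lemma Kfun_eq_sInf (t : ℝ) (u : E) :
    Kfun V D t u = sInf {r : ℝ | ∃ w : V, r = ‖u - w‖ + t * graphNorm D w} :=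
  rfl

variable {D}

lemma le_Kfun {t c : ℝ} {u : E} (h : ∀ w : V, c ≤ ‖u - w‖ + t * graphNorm D w) :
    c ≤ Kfun V D t u :=
  le_csInf ⟨_, 0, rfl⟩ (by rintro _ ⟨w, rfl⟩; exact h w)

variable (D)

lemma Kfun_le {t : ℝ} (ht : 0 ≤ t) (u : E) (w : V) :
    Kfun V D t u ≤ ‖u - w‖ + t * graphNorm D w := by
  refine csInf_le ⟨0, ?_⟩ ⟨w, rfl⟩
  rintro _ ⟨w, rfl⟩
  exact add_nonneg (norm_nonneg _) (mul_nonneg ht (graphNorm_nonneg D w))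

lemma Kfun_nonneg {t : ℝ} (ht : 0 ≤ t) (u : E) : 0 ≤ Kfun V D t u :=
  le_Kfun fun w => add_nonneg (norm_nonneg _) (mul_nonneg ht (graphNorm_nonneg D w))

lemma Kfun_le_norm {t : ℝ} (ht : 0 ≤ t) (u : E) : Kfun V D t u ≤ ‖u‖ := by
  simpa [graphNorm] using Kfun_le D ht u 0

lemma Kfun_le_mul_graphNorm {t : ℝ} (ht : 0 ≤ t) (u : V) :
    Kfun V D t u ≤ t * graphNorm D u := by
  simpa using Kfun_le D ht u u

lemma Kfun_mono {s t : ℝ} (hs : 0 ≤ s) (hst : s ≤ t) (u : E) : Kfun V D s u ≤ Kfun V D t u :=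
  le_Kfun fun w => (Kfun_le D hs u w).trans <| by gcongr; exact graphNorm_nonneg D w

lemma Kfun_two_mul_le {t : ℝ} (ht : 0 ≤ t) (u : E) :
    Kfun V D (2 * t) u ≤ 2 * Kfun V D t u := by
  have : Kfun V D (2 * t) u / 2 ≤ Kfun V D t u := le_Kfun fun w => by
    linarith [Kfun_le D (t := 2 * t) (by linarith) u w, norm_nonneg (u - w)]
  linarith

lemma Kfun_pos {t : ℝ} (ht : 0 < t) {u : E} (hu : u ≠ 0) : 0 < Kfun V D t u := by
  refine lt_of_lt_of_le (by positivity : 0 < min 1 t * ‖u‖) (le_Kfun fun w => ?_)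
  calc min 1 t * ‖u‖ ≤ min 1 t * (‖u - w‖ + graphNorm D w) := by
        gcongr; linarith [norm_sub_norm_le u w, norm_le_graphNorm D w]
    _ ≤ ‖u - w‖ + t * graphNorm D w := by
        rw [mul_add]
        exact add_le_add (mul_le_of_le_one_left (norm_nonneg _) (min_le_left 1 t))
          (mul_le_mul_of_nonneg_right (min_le_right 1 t) (graphNorm_nonneg D w))

-- The infimum defining `Kfun` need not be attained.
def IsNearOptimal (t : ℝ) (u : E) (w : V) : Prop :=
  ‖u - w‖ ≤ 2 * Kfun V D t u ∧ t * graphNorm D w ≤ 2 * Kfun V D t u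

lemma exists_isNearOptimal {t : ℝ} (ht : 0 < t) (u : E) : ∃ w : V, IsNearOptimal D t u w := by
  rcases eq_or_ne u 0 with rfl | hu
  · exact ⟨0, by simp [IsNearOptimal, graphNorm, Kfun_nonneg D ht.le]⟩
  have hK : Kfun V D t u < 2 * Kfun V D t u := by linarith [Kfun_pos D ht hu]
  rw [Kfun_eq_sInf] at hK
  obtain ⟨_, ⟨w, rfl⟩, hw⟩ := exists_lt_of_csInf_lt (by exact ⟨_, 0, rfl⟩) hK
  rw [← Kfun_eq_sInf] at hw
  exact ⟨w, by linarith [mul_nonneg ht.le (graphNorm_nonneg D w)],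
    by linarith [norm_nonneg (u - w)]⟩

lemma halfNorm_nonneg (u : E) : 0 ≤ halfNorm V D u := Real.sqrt_nonneg _

lemma halfNorm_sq (u : E) :
    halfNorm V D u ^ 2 = ∫ t in Ioi 0, Kfun V D t u ^ 2 / t ^ 2 :=
  Real.sq_sqrt (setIntegral_nonneg measurableSet_Ioi fun _ _ => by positivity)

lemma aemeasurable_Kfun (u : E) :
    AEMeasurable (fun t => Kfun V D t u) (volume.restrict (Ioi 0)) :=
  aemeasurable_restrict_of_monotoneOn measurableSet_Ioi fun _ hs _ _ hst =>
    Kfun_mono D (le_of_lt hs) hst u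

lemma integrableOn_Kfun_sq_div_sq (u : V) :
    IntegrableOn (fun t => Kfun V D t u ^ 2 / t ^ 2) (Ioi 0) := by
  have hmeas : AEStronglyMeasurable (fun t => Kfun V D t u ^ 2 / t ^ 2)
      (volume.restrict (Ioi 0)) :=
    ((aemeasurable_Kfun D u).pow_const 2).div (measurable_id.pow_const 2).aemeasurable
      |>.aestronglyMeasurable
  rw [← Ioc_union_Ioi_eq_Ioi zero_le_one]
  refine IntegrableOn.union ?_ ?_
  · refine IntegrableOn.of_bound measure_Ioc_lt_top (hmeas.mono_set Ioc_subset_Ioi_self)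
      (graphNorm D u ^ 2) ?_
    filter_upwards [ae_restrict_mem measurableSet_Ioc] with t ht
    replace ht : 0 < t := ht.1
    rw [Real.norm_of_nonneg (by positivity), div_le_iff₀ (by positivity), ← mul_pow]
    exact pow_le_pow_left₀ (Kfun_nonneg D ht.le u)
      ((Kfun_le_mul_graphNorm D ht.le u).trans_eq (mul_comm _ _)) 2
  · refine Integrable.mono' ((integrableOn_Ioi_rpow_of_lt (by norm_num : (-2 : ℝ) < -1)
      one_pos).const_mul (‖(u : E)‖ ^ 2)) (hmeas.mono_set (Ioi_subset_Ioi zero_le_one)) ?_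
    filter_upwards [ae_restrict_mem measurableSet_Ioi] with t (ht : 1 < t)
    have ht₀ : 0 < t := one_pos.trans ht
    rw [Real.norm_of_nonneg (by positivity), Real.rpow_neg ht₀.le, Real.rpow_two,
      ← div_eq_mul_inv]
    gcongr
    · exact Kfun_nonneg D ht₀.le u
    · exact Kfun_le_norm D ht₀.le u

lemma inv_mul_Kfun_sq_le_setIntegral {a : ℝ} (ha : 0 < a) (u : E)
    (hf : IntegrableOn (fun t => Kfun V D t u ^ 2 / t ^ 2) (Ioc a (2 * a))) :
    a⁻¹ * Kfun V D a u ^ 2 ≤ 4 * ∫ t in Ioc a (2 * a), Kfun V D t u ^ 2 / t ^ 2 := by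
  have hbound : ∀ t ∈ Ioc a (2 * a), Kfun V D a u ^ 2 / (2 * a) ^ 2 ≤ Kfun V D t u ^ 2 / t ^ 2 := by
    rintro t ⟨hat, hta⟩
    have := Kfun_nonneg D ha.le u
    have : 0 < t := ha.trans hat
    gcongr
    exact Kfun_mono D ha.le hat.le u
  have := setIntegral_ge_of_const_le_real measurableSet_Ioc measure_Ioc_lt_top.ne hbound hf
  rw [Real.volume_real_Ioc_of_le (by linarith)] at this
  calc a⁻¹ * Kfun V D a u ^ 2 = 4 * (Kfun V D a u ^ 2 / (2 * a) ^ 2 * (2 * a - a)) := by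
        field_simp; ring
    _ ≤ _ := by gcongr

lemma sum_inv_zpow_mul_Kfun_sq_le (u : V) (s : Finset ℤ) :
    ∑ k ∈ s, ((2 : ℝ) ^ k)⁻¹ * Kfun V D (2 ^ k) u ^ 2 ≤ (2 * halfNorm V D u) ^ 2 := by
  have hf := integrableOn_Kfun_sq_div_sq D u
  have hsub : ∀ k : ℤ, Ioc ((2 : ℝ) ^ k) (2 * 2 ^ k) ⊆ Ioi 0 :=
    fun k => Ioc_subset_Ioi_self.trans (Ioi_subset_Ioi (zpow_pos two_pos k).le)
  calc ∑ k ∈ s, ((2 : ℝ) ^ k)⁻¹ * Kfun V D (2 ^ k) u ^ 2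
      ≤ ∑ k ∈ s, 4 * ∫ t in Ioc (2 ^ k) (2 * 2 ^ k), Kfun V D t u ^ 2 / t ^ 2 :=
        Finset.sum_le_sum fun k _ =>
          inv_mul_Kfun_sq_le_setIntegral D (zpow_pos two_pos k) u (hf.mono_set (hsub k))
    _ ≤ 4 * ∫ t in Ioi 0, Kfun V D t u ^ 2 / t ^ 2 := by
        rw [← Finset.mul_sum]
        gcongr
        refine sum_setIntegral_le_setIntegral s hf ?_ (fun _ => measurableSet_Ioc) hsub
          pairwise_disjoint_Ioc_two_zpow
        filter_upwards with t using by positivity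
    _ = (2 * halfNorm V D u) ^ 2 := by rw [mul_pow, halfNorm_sq]; norm_num

variable {W : Submodule ℝ E} {D₀ : W →ₗ[ℝ] E} {D}

lemma abs_inner_apply_le_of_parts
    (hparts : ∀ (u : V) (v : W), ⟪D u, (v : E)⟫ = -⟪(u : E), D₀ v⟫) (δ : V) (v : E) (b : W) :
    |⟪D δ, v⟫| ≤ ‖D δ‖ * ‖v - b‖ + ‖(δ : E)‖ * ‖D₀ b‖ := by
  have hsplit : ⟪D δ, v⟫ = ⟪D δ, v - b⟫ - ⟪(δ : E), D₀ b⟫ := by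
    rw [inner_sub_right, hparts, sub_neg_eq_add, add_sub_cancel_right]
  rw [hsplit]
  exact (abs_sub _ _).trans (add_le_add (abs_real_inner_le_norm _ _) (abs_real_inner_le_norm _ _))

lemma IsNearOptimal.mul_abs_inner_apply_sub_le
    (hparts : ∀ (u : V) (v : W), ⟪D u, (v : E)⟫ = -⟪(u : E), D₀ v⟫) {t : ℝ} (ht : 0 < t)
    {u v : E} {w w' : V} {b : W} (hw : IsNearOptimal D t u w)
    (hw' : IsNearOptimal D (2 * t) u w') (hb : IsNearOptimal D₀ t v b) :
    t * |⟪D (w - w'), v⟫| ≤ 20 * (Kfun V D t u * Kfun W D₀ t v) := by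
  have hK₂ := Kfun_two_mul_le D ht.le u
  have hKu := Kfun_nonneg D ht.le u
  have hKv := Kfun_nonneg D₀ ht.le v
  have hD : t * ‖D (w - w')‖ ≤ 4 * Kfun V D t u :=
    calc t * ‖D (w - w')‖ ≤ t * (graphNorm D w + graphNorm D w') := by
          rw [map_sub]
          gcongr
          exact (norm_sub_le _ _).trans
            (add_le_add (norm_apply_le_graphNorm D w) (norm_apply_le_graphNorm D w'))
      _ ≤ 4 * Kfun V D t u := by linarith [hw.2, hw'.2]
  have hδ : ‖((w - w' : V) : E)‖ ≤ 6 * Kfun V D t u := by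
    have := norm_sub_le (u - w') (u - w)
    rw [sub_sub_sub_cancel_left] at this
    push_cast
    linarith [hw.1, hw'.1]
  have hD₀ : t * ‖D₀ b‖ ≤ 2 * Kfun W D₀ t v :=
    (mul_le_mul_of_nonneg_left (norm_apply_le_graphNorm D₀ b) ht.le).trans hb.2
  calc t * |⟪D (w - w'), v⟫|
      ≤ t * ‖D (w - w')‖ * ‖v - b‖ + ‖((w - w' : V) : E)‖ * (t * ‖D₀ b‖) :=
        (mul_le_mul_of_nonneg_left (abs_inner_apply_le_of_parts hparts (w - w') v b)
          ht.le).trans_eq (by ring)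
    _ ≤ 4 * Kfun V D t u * (2 * Kfun W D₀ t v) + 6 * Kfun V D t u * (2 * Kfun W D₀ t v) := by
        gcongr
        exact hb.1
    _ = 20 * (Kfun V D t u * Kfun W D₀ t v) := by ring

lemma abs_sum_inner_apply_sub_le
    (hparts : ∀ (u : V) (v : W), ⟪D u, (v : E)⟫ = -⟪(u : E), D₀ v⟫) (u : V) (v : W)
    {w : ℤ → V} {b : ℤ → W} (hw : ∀ k : ℤ, IsNearOptimal D (2 ^ k) u (w k))
    (hb : ∀ k : ℤ, IsNearOptimal D₀ (2 ^ k) v (b k)) (s : Finset ℤ) :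
    |∑ k ∈ s, ⟪D (w k - w (k + 1)), v⟫| ≤ 80 * halfNorm V D u * halfNorm W D₀ v := by
  set F : ℤ → ℝ := fun k => ((2 : ℝ) ^ k)⁻¹ * Kfun V D (2 ^ k) u ^ 2
  set G : ℤ → ℝ := fun k => ((2 : ℝ) ^ k)⁻¹ * Kfun W D₀ (2 ^ k) v ^ 2
  have hterm : ∀ k, |⟪D (w k - w (k + 1)), v⟫| ≤ 20 * (√(F k) * √(G k)) := fun k => by
    have h2k : (0 : ℝ) < 2 ^ k := zpow_pos two_pos k
    have hw' : IsNearOptimal D (2 * 2 ^ k) u (w (k + 1)) := by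
      rw [← zpow_one_add₀ two_ne_zero, add_comm]; exact hw (k + 1)
    have hFG : √(F k) * √(G k) = (2 ^ k)⁻¹ * (Kfun V D (2 ^ k) u * Kfun W D₀ (2 ^ k) v) := by
      have hKu := Kfun_nonneg D h2k.le (u : E)
      have hKv := Kfun_nonneg D₀ h2k.le (v : E)
      rw [← Real.sqrt_mul (by positivity), ← Real.sqrt_sq (by positivity : (0 : ℝ) ≤
        (2 ^ k)⁻¹ * (Kfun V D (2 ^ k) u * Kfun W D₀ (2 ^ k) v))]
      simp only [F, G]
      ring_nf
    rw [hFG, mul_left_comm, le_inv_mul_iff₀ h2k]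
    exact (hw k).mul_abs_inner_apply_sub_le hparts h2k hw' (hb k)
  calc |∑ k ∈ s, ⟪D (w k - w (k + 1)), v⟫|
      ≤ ∑ k ∈ s, 20 * (√(F k) * √(G k)) :=
        (Finset.abs_sum_le_sum_abs _ _).trans (Finset.sum_le_sum fun k _ => hterm k)
    _ ≤ 20 * (√(∑ k ∈ s, F k) * √(∑ k ∈ s, G k)) := by
        rw [← Finset.mul_sum]
        gcongr
        exact Real.sum_sqrt_mul_sqrt_le s (fun k => by positivity) (fun k => by positivity)
    _ ≤ 20 * (2 * halfNorm V D u * (2 * halfNorm W D₀ v)) := by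
        have hN := halfNorm_nonneg D (u : E)
        have hM := halfNorm_nonneg D₀ (v : E)
        gcongr
        · exact (Real.sqrt_le_left (by linarith)).2 (sum_inv_zpow_mul_Kfun_sq_le D u s)
        · exact (Real.sqrt_le_left (by linarith)).2 (sum_inv_zpow_mul_Kfun_sq_le D₀ v s)
    _ = 80 * halfNorm V D u * halfNorm W D₀ v := by ring

lemma IsNearOptimal.abs_inner_apply_sub_le
    (hparts : ∀ (u : V) (v : W), ⟪D u, (v : E)⟫ = -⟪(u : E), D₀ v⟫) {t : ℝ} (ht : 0 ≤ t)
    {u w : V} (hw : IsNearOptimal D t u w) (v : W) :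
    |⟪D (u - w), (v : E)⟫| ≤ 2 * t * graphNorm D u * ‖D₀ v‖ := by
  rw [hparts, abs_neg, Submodule.coe_sub]
  calc |⟪(u - w : E), D₀ v⟫| ≤ ‖(u - w : E)‖ * ‖D₀ v‖ := abs_real_inner_le_norm _ _
    _ ≤ 2 * (t * graphNorm D u) * ‖D₀ v‖ := by
        gcongr
        exact hw.1.trans (mul_le_mul_of_nonneg_left (Kfun_le_mul_graphNorm D ht u) two_pos.le)
    _ = 2 * t * graphNorm D u * ‖D₀ v‖ := by ring

lemma IsNearOptimal.mul_abs_inner_apply_le {t : ℝ} (ht : 0 ≤ t) {u : E} {w : V}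
    (hw : IsNearOptimal D t u w) (v : E) : t * |⟪D w, v⟫| ≤ 2 * ‖u‖ * ‖v‖ :=
  calc t * |⟪D w, v⟫| ≤ t * graphNorm D w * ‖v‖ := by
        rw [mul_assoc]
        gcongr
        exact (abs_real_inner_le_norm _ _).trans
          (mul_le_mul_of_nonneg_right (norm_apply_le_graphNorm D w) (norm_nonneg v))
    _ ≤ 2 * ‖u‖ * ‖v‖ := mul_le_mul_of_nonneg_right
        (hw.2.trans (mul_le_mul_of_nonneg_left (Kfun_le_norm D ht u) two_pos.le)) (norm_nonneg v)

lemma abs_inner_apply_le_of_isNearOptimal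
    (hparts : ∀ (u : V) (v : W), ⟪D u, (v : E)⟫ = -⟪(u : E), D₀ v⟫) (u : V) (v : W)
    {w : ℤ → V} {b : ℤ → W} (hw : ∀ k : ℤ, IsNearOptimal D (2 ^ k) u (w k))
    (hb : ∀ k : ℤ, IsNearOptimal D₀ (2 ^ k) v (b k)) (m : ℕ) :
    |⟪D u, (v : E)⟫| ≤ 80 * halfNorm V D u * halfNorm W D₀ v
      + ((2 : ℝ) ^ m)⁻¹ * (2 * graphNorm D u * ‖D₀ v‖ + 2 * ‖(u : E)‖ * ‖(v : E)‖) := by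
  have htelescope : ⟪D u, (v : E)⟫ = ⟪D (u - w (-m)), v⟫
      + ∑ k ∈ Finset.Ico (-m : ℤ) m, ⟪D (w k - w (k + 1)), v⟫ + ⟪D (w m), v⟫ := by
    simp only [map_sub, inner_sub_left, Finset.sum_Ico_int_sub]
    ring
  have h2m : ((2 : ℝ) ^ m)⁻¹ = 2 ^ (-m : ℤ) := by rw [zpow_neg, zpow_natCast]
  have hlow := (hw (-m)).abs_inner_apply_sub_le hparts (zpow_pos two_pos _).le v
  have hhigh := (hw m).mul_abs_inner_apply_le (zpow_pos two_pos _).le v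
  rw [zpow_natCast, ← le_inv_mul_iff₀ (by positivity)] at hhigh
  rw [← h2m] at hlow
  rw [htelescope]
  calc _ ≤ _ := abs_add_three _ _ _
    _ ≤ _ := add_le_add_three hlow (abs_sum_inner_apply_sub_le hparts u v hw hb _) hhigh
    _ = _ := by ring

end

/-- interpolation bound for the time-derivative pairing.
Let `V₀ = L₂(I;L₂(Ω))`, let `V₁ = H¹(I;L₂(Ω))` with time derivative `D`, and let
`W₁ = H¹₀(I;L₂(Ω))` with time derivative `D₀`, related by integration by parts
`⟪D u, v⟫ = −⟪u, D₀ v⟫` (no boundary terms, as `v` vanishes at both endpoints).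
Then the pairing `(u,v) ↦ ∫_{I×Ω} ∂ₜu · v = ⟪D u, v⟫`, which is bounded
`V₁ × V₀ → ℝ` and (by parts) `V₀ × W₁ → ℝ`, satisfies
`|∫_{I×Ω} ∂ₜu₁ v₃| ≲ ‖u₁‖_{H^{1/2}(I;L₂(Ω))} ‖v₃‖_{H^{1/2}_{00}(I;L₂(Ω))}`,
with the `1/2`-interpolation norms `[V₀,V₁]_{1/2}` and `[V₀,W₁]_{1/2}` realized by
the K-method; in particular the pairing extends continuously to these spaces. -/
theorem time_derivative_pairing_interpolation_bound
    (V₁ W₁ : Submodule ℝ V₀)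
    (D : V₁ →ₗ[ℝ] V₀) (D₀ : W₁ →ₗ[ℝ] V₀)
    (hparts : ∀ (u : V₁) (v : W₁), ⟪D u, (v : V₀)⟫ = -⟪(u : V₀), D₀ v⟫) :
    ∃ C > 0, ∀ (u : V₁) (v : W₁),
      |⟪D u, (v : V₀)⟫| ≤ C * halfNorm V₁ D (u : V₀) * halfNorm W₁ D₀ (v : V₀) := by
  refine ⟨80, by norm_num, fun u v => ?_⟩
  choose w hw using fun k : ℤ => exists_isNearOptimal D (zpow_pos two_pos k) (u : V₀)
  choose b hb using fun k : ℤ => exists_isNearOptimal D₀ (zpow_pos two_pos k) (v : V₀)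
  refine ge_of_tendsto' (x := Filter.atTop) ?_
    (abs_inner_apply_le_of_isNearOptimal hparts u v hw hb)
  have hdecay : Filter.Tendsto (fun m : ℕ => ((2 : ℝ) ^ m)⁻¹) Filter.atTop (nhds 0) :=
    tendsto_inv_atTop_zero.comp (tendsto_pow_atTop_atTop_of_one_lt one_lt_two)
  simpa using tendsto_const_nhds.add (hdecay.mul_const _)

end
end
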